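/- (1) Let p : ℝ^d → ℝ^t be a polynomial map with p(0) = 0 and W ⊆ T(ℝ^t). Then the set of paths X in ℝ^d such that the path t ↦ p(X_t − X₀) lies in 𝒱(W) equals 𝒱(M_p W), where M_p := Λ_{φ(p)} with φ(p)(i) := φ(p_i) for each letter i of {1,…,t}. (2) Let B : ℝ^t → T^{≥1}(ℝ^d) be linear and W ⊆ T(ℝ^t). Then the set of paths X in ℝ^d such that the path Λ_B^* X := (t ↦ (⟨σ(X)_t, B(1)⟩, …, ⟨σ(X)_t, B(t)⟩)) lies in 𝒱(W) equals 𝒱(Λ_B W). -/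

import Mathlib

open scoped BigOperators TensorProduct

namespace PathVarieties

/-- Words over an alphabet `α`; the letters `{1,…,d}` of `ℝ^d` correspond to `α = Fin d`. -/
abbrev Word (α : Type*) := List α

/-- The tensor algebra `T(ℝ^d)`, identified with the free real vector space on words. -/
abbrev TA (α : Type*) := Word α →₀ ℝ

/-- The list of all (riffle) shuffles of two words. -/
def shuffles {α : Type*} : Word α → Word α → List (Word α)
  | [], v => [v]
  | a :: u, [] => [a :: u]
  | a :: u, b :: v =>
      ((shuffles u (b :: v)).map (a :: ·)) ++ ((shuffles (a :: u) v).map (b :: ·))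
termination_by u v => u.length + v.length
decreasing_by all_goals (simp only [List.length_cons]; omega)

/-- Shuffle product of two words, as an element of `T(ℝ^d)`. -/
noncomputable def shw {α : Type*} (u v : Word α) : TA α :=
  ((shuffles u v).map fun w => Finsupp.single w (1 : ℝ)).sum

/-- The shuffle product `⧢` on `T(ℝ^d)`, the bilinear extension of the shuffle of words. -/
noncomputable def sh {α : Type*} (x y : TA α) : TA α :=
  x.sum fun u cu => y.sum fun v cv => (cu * cv) • shw u v

/-- Right halfshuffle `u ≻ v` of words (`v` nonempty): shuffle `u` with `v` minus its
last letter, then append the last letter of `v`.  (This is the unique bilinear operation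
with `w ≻ a = wa` and `w ≻ (va) = (w≻v + v≻w)a`.) -/
noncomputable def rshw {α : Type*} (u v : Word α) : TA α :=
  ((shuffles u v.dropLast).map fun w =>
    Finsupp.single (w ++ v.drop (v.length - 1)) (1 : ℝ)).sum

/-- Right halfshuffle `≻` on `T^{≥1}(ℝ^d)`, extended bilinearly. -/
noncomputable def rsh {α : Type*} (x y : TA α) : TA α :=
  x.sum fun u cu => y.sum fun v cv => (cu * cv) • rshw u v

/-- Left halfshuffle `u ≺ v` of words (`u` nonempty): the first letter of `u` followed by
the shuffle of the rest of `u` with `v`.  (This is the unique bilinear operation with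
`a ≺ w = aw` and `(av) ≺ w = a(w≺v + v≺w)`.) -/
noncomputable def lshw {α : Type*} (u v : Word α) : TA α :=
  ((shuffles u.tail v).map fun w => Finsupp.single (u.take 1 ++ w) (1 : ℝ)).sum

/-- Left halfshuffle `≺` on `T^{≥1}(ℝ^d)`, extended bilinearly. -/
noncomputable def lsh {α : Type*} (x y : TA α) : TA α :=
  x.sum fun u cu => y.sum fun v cv => (cu * cv) • lshw u v

/-- The antipode `𝒜`, with `𝒜(i₁⋯iₙ) = (−1)ⁿ iₙ⋯i₁`. -/
noncomputable def antipode {α : Type*} (x : TA α) : TA α :=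
  x.sum fun w c => Finsupp.single w.reverse (((-1 : ℝ) ^ w.length) * c)

/-- Helper for `Λ_B`: value on a reversed word. -/
noncomputable def lamRev {α β : Type*} (B : α → TA β) : Word α → TA β
  | [] => Finsupp.single [] 1
  | [i] => B i
  | i :: w => rsh (lamRev B w) (B i)

/-- `Λ_B` on a word: `Λ_B e = e`, `Λ_B i = B i`, `Λ_B (w·i) = (Λ_B w) ≻ (Λ_B i)`. -/
noncomputable def lamW {α β : Type*} (B : α → TA β) (w : Word α) : TA β :=
  lamRev B w.reverse

/-- The linear map `Λ_B : T(ℝ^t) → T(ℝ^d)` induced by `B` on letters. -/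
noncomputable def Lam {α β : Type*} (B : α → TA β) (x : TA α) : TA β :=
  x.sum fun w c => c • lamW B w

/-- `splitEmb e j n w = Σ_{w = u₁⋯uₙ} e_j(u₁) ⧢ e_{j+1}(u₂) ⧢ ⋯ ⧢ e_{j+n−1}(uₙ)`,
the sum over all splittings of `w` into `n` consecutive (possibly empty) factors,
each factor relabelled letterwise by `e`. -/
noncomputable def splitEmb {α β : Type*} (e : ℕ → α → β) : ℕ → ℕ → Word α → TA β
  | _, 0, w => if w.isEmpty then Finsupp.single ([] : Word β) (1 : ℝ) else 0
  | j, k + 1, w => ∑ m ∈ Finset.range (w.length + 1),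
      sh (Finsupp.single ((w.take m).map (e j)) (1 : ℝ)) (splitEmb e (j + 1) k (w.drop m))

/-- `Σ_{x=uv} f(u)·v`: deconcatenate, evaluate the functional `f` on prefixes. -/
noncomputable def leftAct {α : Type*} (f : Word α → ℝ) (x : TA α) : TA α :=
  x.sum fun w c => c • ∑ k ∈ Finset.range (w.length + 1),
    f (w.take k) • Finsupp.single (w.drop k) (1 : ℝ)

/-- `Σ_{x=uv} u·f(v)`: deconcatenate, evaluate the functional `f` on suffixes. -/
noncomputable def rightAct {α : Type*} (f : Word α → ℝ) (x : TA α) : TA α :=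
  x.sum fun w c => c • ∑ k ∈ Finset.range (w.length + 1),
    f (w.drop k) • Finsupp.single (w.take k) (1 : ℝ)

/-- A raw path: a time horizon `T` together with a map `ℝ → ℝ^α`
(only the restriction to `[0,T]` is relevant). -/
structure RawPath (α : Type*) where
  T : ℝ
  toFun : ℝ → α → ℝ

/-- A path: positive time horizon, continuous on `[0,T]` and piecewise continuously
differentiable there (witnessed by a partition `0 = τ₀ < τ₁ < ⋯ < τₙ = T`). -/
def IsPath {α : Type*} (X : RawPath α) : Prop :=
  0 < X.T ∧ (∀ i, ContinuousOn (fun t => X.toFun t i) (Set.Icc 0 X.T)) ∧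
    ∃ (n : ℕ) (τ : Fin (n + 1) → ℝ), StrictMono τ ∧ τ 0 = 0 ∧ τ (Fin.last n) = X.T ∧
      ∀ (k : Fin n) (i : α), ContDiffOn ℝ 1 (fun t => X.toFun t i)
        (Set.Icc (τ k.castSucc) (τ k.succ))

/-- Iterated integrals, by recursion on the reversed word:
`sigRev X (i :: w) t = ∫₀ᵗ ⟨σ(X)ₛ, w.reverse⟩ dX⁽ⁱ⁾(s)`. -/
noncomputable def sigRev {α : Type*} (X : ℝ → α → ℝ) : Word α → ℝ → ℝ
  | [], _ => 1
  | i :: w, t => ∫ s in (0 : ℝ)..t, sigRev X w s * deriv (fun u => X u i) s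

/-- `⟨σ(X)_t, w⟩`, the iterated-integrals signature of `X` stopped at time `t`. -/
noncomputable def sigUpTo {α : Type*} (X : RawPath α) (t : ℝ) (w : Word α) : ℝ :=
  sigRev X.toFun w.reverse t

/-- `⟨σ(X), w⟩`, the iterated-integrals signature of the path `X` at a word `w`. -/
noncomputable def sig {α : Type*} (X : RawPath α) (w : Word α) : ℝ :=
  sigUpTo X X.T w

/-- Pairing of a word-indexed functional with an element of `T(ℝ^d)`. -/
noncomputable def pairF {α : Type*} (f : Word α → ℝ) (x : TA α) : ℝ :=
  x.sum fun w c => c * f w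

/-- `⟨σ(X), x⟩` for a tensor `x ∈ T(ℝ^d)` (linear in `x`). -/
noncomputable def pair {α : Type*} (X : RawPath α) (x : TA α) : ℝ :=
  Finsupp.linearCombination ℝ (sig X) x

/-- The path variety `𝒱(W)` of all paths whose signature kills every element of `W`. -/
def V {α : Type*} (W : Set (TA α)) : Set (RawPath α) :=
  {X | IsPath X ∧ ∀ x ∈ W, pair X x = 0}

/-- `ℐ(M)`, the space of tensors killed by the signature of every path in `M`. -/
noncomputable def Idl {α : Type*} (M : Set (RawPath α)) : Submodule ℝ (TA α) :=
  ⨅ X ∈ M, LinearMap.ker (Finsupp.linearCombination ℝ (sig X))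

/-- Concatenation `X ⊔ Y` of paths. -/
noncomputable def concat {α : Type*} (X Y : RawPath α) : RawPath α where
  T := X.T + Y.T
  toFun := fun t i =>
    if t ≤ X.T then X.toFun t i else Y.toFun (t - X.T) i + X.toFun X.T i - Y.toFun 0 i

/-- Time reversal `⟵X`. -/
def timeRev {α : Type*} (X : RawPath α) : RawPath α :=
  ⟨X.T, fun t i => X.toFun (X.T - t) i⟩

/-- `concatIter X n = X^{⊔(n+1)}`. -/
noncomputable def concatIter {α : Type*} (X : RawPath α) : ℕ → RawPath α
  | 0 => X
  | n + 1 => concat (concatIter X n) X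

/-- `X^{⊔n}`, the `n`-fold concatenation of `X` with itself (intended for `n ≥ 1`). -/
noncomputable def concatPow {α : Type*} (X : RawPath α) (n : ℕ) : RawPath α :=
  concatIter X (n - 1)

/-- `concatFold f k = f 0 ⊔ f 1 ⊔ ⋯ ⊔ f k`. -/
noncomputable def concatFold {α : Type*} (f : ℕ → RawPath α) : ℕ → RawPath α
  | 0 => f 0
  | k + 1 => concat (concatFold f k) (f (k + 1))

/-- The deconcatenation coproduct `Δ : T(ℝ^d) → T(ℝ^d) ⊗ T(ℝ^d)`,
`Δw = Σ_{w=uv} u ⊗ v`. -/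
noncomputable def deconc {α : Type*} (x : TA α) : TensorProduct ℝ (TA α) (TA α) :=
  x.sum fun w c => c • ∑ k ∈ Finset.range (w.length + 1),
    (Finsupp.single (w.take k) (1 : ℝ)) ⊗ₜ[ℝ] (Finsupp.single (w.drop k) (1 : ℝ))

/-!
Both statements reduce to the second one with `B j = φ(p j)`: by the shuffle identity and
`⟨σ(X)_t, j⟩ = X_t^j - X_0^j`, one has `⟨σ(X)_t, φ(q)⟩ = q(X_t - X_0)`.

For the second one, let `Y = Λ_B^* X`. The key identity
`d/dt ⟨σ(X)_t, x ≻ y⟩ = ⟨σ(X)_t, x⟩ · d/dt ⟨σ(X)_t, y⟩` (for `y` without constant term)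
shows, by induction on `w`, that `⟨σ(Y)_t, w i⟩` and `⟨σ(X)_t, Λ_B(w i)⟩` vanish at `0` and
have the same derivative `⟨σ(Y)_t, w⟩ Ẏ^i_t`. Hence `⟨σ(Y), x⟩ = ⟨σ(X), Λ_B x⟩` for all `x`,
so `Y ∈ 𝒱(W)` iff `X ∈ 𝒱(Λ_B W)`.

All derivatives are taken on the open pieces of a partition on which the path is `C¹`: two
continuous functions that agree at `0` and have equal derivatives off finitely many points agree.
-/

open Set MeasureTheory intervalIntegral

section Shuffles

variable {α M : Type*} [AddCommMonoid M]

theorem shuffles_nil_left (v : Word α) : shuffles [] v = [v] := by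
  simp [shuffles]

theorem shuffles_nil_right (u : Word α) : shuffles u [] = [u] := by
  cases u <;> simp [shuffles]

theorem shuffles_cons_cons (a b : α) (u v : Word α) :
    shuffles (a :: u) (b :: v) =
      (shuffles u (b :: v)).map (a :: ·) ++ (shuffles (a :: u) v).map (b :: ·) := by
  rw [shuffles]

def shuffleSum (f : Word α → M) (u v : Word α) : M :=
  ((shuffles u v).map f).sum

@[simp]
theorem shuffleSum_nil_left (f : Word α → M) (v : Word α) : shuffleSum f [] v = f v := by
  simp [shuffleSum, shuffles_nil_left]

@[simp]
theorem shuffleSum_nil_right (f : Word α → M) (u : Word α) : shuffleSum f u [] = f u := by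
  simp [shuffleSum, shuffles_nil_right]

theorem shuffleSum_cons_cons (f : Word α → M) (a b : α) (u v : Word α) :
    shuffleSum f (a :: u) (b :: v) =
      shuffleSum (fun z => f (a :: z)) u (b :: v) +
        shuffleSum (fun z => f (b :: z)) (a :: u) v := by
  simp [shuffleSum, shuffles_cons_cons, Function.comp_def]

theorem shuffleSum_zero (u v : Word α) : shuffleSum (fun _ => (0 : M)) u v = 0 := by
  simp [shuffleSum]

theorem shuffleSum_mul_right (f : Word α → ℝ) (c : ℝ) (u v : Word α) :
    shuffleSum (fun z => f z * c) u v = shuffleSum f u v * c := by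
  simp [shuffleSum, ← List.sum_map_mul_right]

theorem shuffleSum_append_singleton (a b : α) : ∀ (f : Word α → M) (u v : Word α),
    shuffleSum f (u ++ [a]) (v ++ [b]) =
      shuffleSum (fun z => f (z ++ [a])) u (v ++ [b]) +
        shuffleSum (fun z => f (z ++ [b])) (u ++ [a]) v
  | f, [], [] => by
    simp [shuffleSum_cons_cons, add_comm]
  | f, [], c :: v => by
    have ih := shuffleSum_append_singleton a b (fun z => f (c :: z)) [] v
    simp only [List.nil_append, List.cons_append, shuffleSum_nil_left] at ih ⊢
    rw [shuffleSum_cons_cons, shuffleSum_cons_cons _ a c [] v, ih]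
    simp only [shuffleSum_nil_left, List.cons_append]
    abel
  | f, c :: u, [] => by
    have ih := shuffleSum_append_singleton a b (fun z => f (c :: z)) u []
    simp only [List.nil_append, List.cons_append, shuffleSum_nil_right] at ih ⊢
    rw [shuffleSum_cons_cons, shuffleSum_cons_cons _ c b u [], ih]
    simp only [shuffleSum_nil_right, List.cons_append]
    abel
  | f, c :: u, e :: v => by
    have ih₁ := shuffleSum_append_singleton a b (fun z => f (c :: z)) u (e :: v)
    have ih₂ := shuffleSum_append_singleton a b (fun z => f (e :: z)) (c :: u) v
    simp only [List.cons_append] at ih₁ ih₂ ⊢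
    rw [shuffleSum_cons_cons, ih₁, ih₂, shuffleSum_cons_cons _ c e u (v ++ [b]),
      shuffleSum_cons_cons _ c e (u ++ [a]) v]
    simp only [List.cons_append]
    abel
termination_by _ u v => u.length + v.length

end Shuffles

section Pairing

variable {α β : Type*}

theorem pairF_eq_linearCombination (f : Word α → ℝ) (x : TA α) :
    pairF f x = Finsupp.linearCombination ℝ f x := by
  simp [pairF, Finsupp.linearCombination_apply, Finsupp.sum, smul_eq_mul]

theorem pair_eq_pairF (X : RawPath α) (x : TA α) : pair X x = pairF (sig X) x :=
  (pairF_eq_linearCombination _ x).symm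

theorem pairF_eq_sum (f : Word α → ℝ) (x : TA α) :
    pairF f x = ∑ w ∈ x.support, x w * f w := rfl

@[simp]
theorem pairF_single (f : Word α → ℝ) (w : Word α) (c : ℝ) :
    pairF f (Finsupp.single w c) = c * f w := by
  simp [pairF_eq_linearCombination]

@[simp]
theorem pairF_add (f : Word α → ℝ) (x y : TA α) : pairF f (x + y) = pairF f x + pairF f y := by
  simp [pairF_eq_linearCombination]

theorem pairF_shw (f : Word α → ℝ) (u v : Word α) : pairF f (shw u v) = shuffleSum f u v := by
  simp [shw, shuffleSum, pairF_eq_linearCombination, map_list_sum, Function.comp_def]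

theorem pairF_rshw_append_singleton (f : Word α → ℝ) (u v : Word α) (a : α) :
    pairF f (rshw u (v ++ [a])) = shuffleSum (fun z => f (z ++ [a])) u v := by
  simp [rshw, shuffleSum, pairF_eq_linearCombination, map_list_sum, Function.comp_def]

theorem pairF_sh (f : Word α → ℝ) (x y : TA α) :
    pairF f (sh x y) = x.sum fun u cu => y.sum fun v cv => cu * cv * shuffleSum f u v := by
  simp [sh, pairF_eq_linearCombination, Finsupp.sum, map_sum, ← pairF_shw]

theorem pairF_sh_eq_mul {f : Word α → ℝ} (hf : ∀ u v, shuffleSum f u v = f u * f v)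
    (x y : TA α) : pairF f (sh x y) = pairF f x * pairF f y := by
  rw [pairF_sh, pairF, pairF, Finsupp.sum_mul]
  refine Finset.sum_congr rfl fun u _ => ?_
  dsimp only
  rw [Finsupp.mul_sum]
  refine Finset.sum_congr rfl fun v _ => ?_
  dsimp only
  rw [hf]
  ring

def counit (w : Word α) : ℝ := if w = [] then 1 else 0

theorem pairF_counit (x : TA α) : pairF counit x = x [] := by
  classical
  rw [pairF_eq_sum]
  simp only [counit, mul_ite, mul_one, mul_zero, Finset.sum_ite_eq', Finsupp.mem_support_iff]
  split_ifs <;> simp_all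

theorem shuffleSum_counit (u v : Word α) : shuffleSum counit u v = counit u * counit v := by
  cases u <;> cases v <;> simp [counit, shuffleSum_cons_cons, shuffleSum_zero]

theorem sh_apply_nil (x y : TA α) : sh x y [] = x [] * y [] := by
  simpa [pairF_counit] using pairF_sh_eq_mul shuffleSum_counit x y

theorem pairF_rsh (f : Word α → ℝ) (x y : TA α) :
    pairF f (rsh x y) = x.sum fun u cu => y.sum fun v cv => cu * cv * pairF f (rshw u v) := by
  simp [rsh, pairF_eq_linearCombination, Finsupp.sum, map_sum]

theorem pairF_rsh_eq_mul {f g h : Word α → ℝ}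
    (hfgh : ∀ u v a, shuffleSum (fun z => f (z ++ [a])) u v = g u * h (v ++ [a]))
    (x : TA α) {y : TA α} (hy : y [] = 0) : pairF f (rsh x y) = pairF g x * pairF h y := by
  rw [pairF_rsh, pairF, pairF, Finsupp.sum_mul]
  refine Finset.sum_congr rfl fun u _ => ?_
  dsimp only
  rw [Finsupp.mul_sum]
  refine Finset.sum_congr rfl fun v hv => ?_
  obtain ⟨v', a, rfl⟩ : ∃ v' a, v = v' ++ [a] := by
    rcases v.eq_nil_or_concat' with rfl | h
    · simp [hy] at hv
    · exact h
  dsimp only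
  rw [pairF_rshw_append_singleton, hfgh]
  ring

theorem pairF_Lam (f : Word β → ℝ) (B : α → TA β) (x : TA α) :
    pairF f (Lam B x) = pairF (fun w => pairF f (lamW B w)) x := by
  simp [Lam, pairF_eq_linearCombination, Finsupp.sum, map_sum, Finsupp.linearCombination_apply]

theorem rsh_single_nil_one (y : TA α) : rsh (Finsupp.single [] 1) y = y := by
  have hrshw : ∀ v : Word α, rshw [] v = Finsupp.single v 1 := by
    intro v
    simp [rshw, shuffles_nil_left, List.dropLast_eq_take, List.take_append_drop]
  simp [rsh, hrshw, Finsupp.sum_single]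

theorem lamRev_cons (B : α → TA β) (i : α) (w : Word α) :
    lamRev B (i :: w) = rsh (lamRev B w) (B i) := by
  cases w with
  | nil => simp [lamRev, rsh_single_nil_one]
  | cons j w' => rfl

end Pairing

section Calculus

theorem eqOn_of_hasDerivAt_off_countable {F G f : ℝ → ℝ} {a b : ℝ} {S : Set ℝ}
    (hS : S.Countable) (hF : ContinuousOn F (Icc a b)) (hG : ContinuousOn G (Icc a b))
    (ha : F a = G a) (hF' : ∀ x ∈ Ioo a b \ S, HasDerivAt F (f x) x)
    (hG' : ∀ x ∈ Ioo a b \ S, HasDerivAt G (f x) x) : EqOn F G (Icc a b) := by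
  intro t ht
  have hsub : Ioo a t \ S ⊆ Ioo a b \ S := sdiff_subset_sdiff_left (Ioo_subset_Ioo_right ht.2)
  have key := integral_eq_of_hasDerivAt_off_countable_of_le (F - G) 0 ht.1 hS
    ((hF.sub hG).mono (Icc_subset_Icc_right ht.2))
    (fun x hx => by simpa using (hF' x (hsub hx)).sub (hG' x (hsub hx)))
    intervalIntegrable_const
  simp only [Pi.zero_apply, intervalIntegral.integral_zero, Pi.sub_apply] at key
  linarith

structure Partition (T : ℝ) where
  n : ℕ
  τ : Fin (n + 1) → ℝ
  strictMono : StrictMono τ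
  τ_zero : τ 0 = 0
  τ_last : τ (Fin.last n) = T

namespace Partition

theorem nonneg {T : ℝ} (P : Partition T) : 0 ≤ T :=
  P.τ_zero.symm.trans_le ((P.strictMono.monotone (Fin.zero_le _)).trans_eq P.τ_last)

variable {T : ℝ} (P : Partition T)

theorem Icc_subset (k : Fin P.n) : Icc (P.τ k.castSucc) (P.τ k.succ) ⊆ Icc 0 T :=
  Icc_subset_Icc (P.τ_zero.symm.trans_le (P.strictMono.monotone (Fin.zero_le _)))
    ((P.strictMono.monotone (Fin.le_last _)).trans_eq P.τ_last)

theorem exists_mem_Ioc {s : ℝ} (hs : s ∈ Ioc 0 T) :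
    ∃ k : Fin P.n, s ∈ Ioc (P.τ k.castSucc) (P.τ k.succ) := by
  classical
  obtain ⟨i, hi, hmin⟩ := (Finset.univ.filter fun i => s ≤ P.τ i).exists_min_image id
    ⟨Fin.last _, by simp [P.τ_last, hs.2]⟩
  simp only [Finset.mem_filter, Finset.mem_univ, true_and, id] at hi hmin
  obtain ⟨k, rfl⟩ : ∃ k, Fin.succ k = i :=
    Fin.exists_succ_eq.2 fun h => by rw [h, P.τ_zero] at hi; exact hs.1.not_ge hi
  refine ⟨k, lt_of_not_ge fun h => ?_, hi⟩
  exact (hmin _ h).not_gt Fin.castSucc_lt_succ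

theorem exists_mem_Ioo {s : ℝ} (hs : s ∈ Ioo 0 T \ range P.τ) :
    ∃ k : Fin P.n, s ∈ Ioo (P.τ k.castSucc) (P.τ k.succ) := by
  obtain ⟨k, hk⟩ := P.exists_mem_Ioc (Ioo_subset_Ioc_self hs.1)
  exact ⟨k, hk.1, hk.2.lt_of_ne fun h => hs.2 ⟨_, h.symm⟩⟩

theorem eqOn_of_hasDerivAt {F G f : ℝ → ℝ} (hF : ContinuousOn F (Icc 0 T))
    (hG : ContinuousOn G (Icc 0 T)) (h0 : F 0 = G 0)
    (hF' : ∀ k : Fin P.n, ∀ x ∈ Ioo (P.τ k.castSucc) (P.τ k.succ), HasDerivAt F (f x) x)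
    (hG' : ∀ k : Fin P.n, ∀ x ∈ Ioo (P.τ k.castSucc) (P.τ k.succ), HasDerivAt G (f x) x) :
    EqOn F G (Icc 0 T) := by
  refine eqOn_of_hasDerivAt_off_countable (f := f) (countable_range P.τ) hF hG h0 (fun x hx => ?_)
    (fun x hx => ?_)
  · obtain ⟨k, hk⟩ := P.exists_mem_Ioo hx
    exact hF' k x hk
  · obtain ⟨k, hk⟩ := P.exists_mem_Ioo hx
    exact hG' k x hk

def PiecewiseContinuous (g : ℝ → ℝ) : Prop :=
  ∀ k : Fin P.n, ∃ h : ℝ → ℝ, ContinuousOn h (Icc (P.τ k.castSucc) (P.τ k.succ)) ∧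
    EqOn g h (Ioo (P.τ k.castSucc) (P.τ k.succ))

def IsPiecewiseC1 (F : ℝ → ℝ) : Prop :=
  ContinuousOn F (Icc 0 T) ∧ ∀ k : Fin P.n, ContDiffOn ℝ 1 F (Icc (P.τ k.castSucc) (P.τ k.succ))

variable {P}

theorem PiecewiseContinuous.continuousOn_mul {F g : ℝ → ℝ} (hF : ContinuousOn F (Icc 0 T))
    (hg : P.PiecewiseContinuous g) : P.PiecewiseContinuous fun t => F t * g t := fun k =>
  let ⟨h, hc, he⟩ := hg k
  ⟨fun t => F t * h t, (hF.mono (P.Icc_subset k)).mul hc, fun t ht => by simp [he ht]⟩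

theorem PiecewiseContinuous.integrableOn {g : ℝ → ℝ} (hg : P.PiecewiseContinuous g) :
    IntegrableOn g (Ioc 0 T) := by
  have hpiece : ∀ k : Fin P.n, IntegrableOn g (Ioc (P.τ k.castSucc) (P.τ k.succ)) := by
    intro k
    obtain ⟨h, hc, he⟩ := hg k
    rw [integrableOn_Ioc_iff_integrableOn_Ioo]
    exact (hc.integrableOn_Icc.mono_set Ioo_subset_Icc_self).congr_fun he.symm measurableSet_Ioo
  refine (integrableOn_finite_iUnion.2 hpiece).mono_set fun s hs => ?_
  obtain ⟨k, hk⟩ := P.exists_mem_Ioc hs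
  exact mem_iUnion.2 ⟨k, hk⟩

theorem PiecewiseContinuous.intervalIntegrable {g : ℝ → ℝ} (hg : P.PiecewiseContinuous g)
    {t : ℝ} (ht : t ∈ Icc 0 T) : IntervalIntegrable g volume 0 t := by
  rw [intervalIntegrable_iff_integrableOn_Ioc_of_le ht.1]
  exact hg.integrableOn.mono_set (Ioc_subset_Ioc_right ht.2)

theorem PiecewiseContinuous.hasDerivAt_primitive {g : ℝ → ℝ} (hg : P.PiecewiseContinuous g)
    {k : Fin P.n} {x : ℝ} (hx : x ∈ Ioo (P.τ k.castSucc) (P.τ k.succ)) :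
    HasDerivAt (fun t => ∫ s in (0 : ℝ)..t, g s) (g x) x := by
  obtain ⟨h, hc, he⟩ := hg k
  have hgc : ContinuousOn g (Ioo (P.τ k.castSucc) (P.τ k.succ)) :=
    (hc.mono Ioo_subset_Icc_self).congr he
  exact integral_hasDerivAt_right
    (hg.intervalIntegrable (P.Icc_subset k (Ioo_subset_Icc_self hx)))
    (hgc.stronglyMeasurableAtFilter isOpen_Ioo x hx) (hgc.continuousAt (isOpen_Ioo.mem_nhds hx))

theorem PiecewiseContinuous.isPiecewiseC1_primitive {g : ℝ → ℝ}
    (hg : P.PiecewiseContinuous g) : P.IsPiecewiseC1 fun t => ∫ s in (0 : ℝ)..t, g s := by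
  have hcont : ContinuousOn (fun t => ∫ s in (0 : ℝ)..t, g s) (Icc 0 T) := by
    have := continuousOn_primitive_interval (μ := volume) (a := 0) (b := T) (f := g)
      (by rw [uIcc_of_le P.nonneg, integrableOn_Icc_iff_integrableOn_Ioc]; exact hg.integrableOn)
    rwa [uIcc_of_le P.nonneg] at this
  refine ⟨hcont, fun k => ?_⟩
  obtain ⟨h, hc, he⟩ := hg k
  set a := P.τ k.castSucc
  set b := P.τ k.succ
  have hab : a ≤ b := (P.strictMono Fin.castSucc_lt_succ).le
  set h' : ℝ → ℝ := IccExtend hab ((Icc a b).domRestrict h)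
  have hh' : Continuous h' := hc.domRestrict.Icc_extend'
  have hh'_eq : EqOn h' h (Icc a b) := fun x hx => IccExtend_of_mem hab _ hx
  have hQ : ∀ u, HasDerivAt (fun t => ∫ s in a..t, h' s) (h' u) u := fun u =>
    (hh'.integral_hasStrictDerivAt a u).hasDerivAt
  have hQC1 : ContDiff ℝ 1 fun t => ∫ s in a..t, h' s := by
    refine contDiff_one_iff_deriv.2 ⟨fun u => (hQ u).differentiableAt, ?_⟩
    rw [funext fun u => (hQ u).deriv]
    exact hh'
  have hG : ContDiff ℝ 1 fun t => (∫ s in (0 : ℝ)..a, g s) + ∫ s in a..t, h' s :=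
    contDiff_const.add hQC1
  refine hG.contDiffOn.congr
    (eqOn_of_hasDerivAt_off_countable countable_empty (hcont.mono (P.Icc_subset k))
      hG.continuous.continuousOn (by simp) (f := g)
      (fun x hx => hg.hasDerivAt_primitive hx.1) (fun x hx => ?_))
  rw [he hx.1, ← hh'_eq (Ioo_subset_Icc_self hx.1)]
  exact (hQ x).const_add _

theorem IsPiecewiseC1.hasDerivAt {F : ℝ → ℝ} (hF : P.IsPiecewiseC1 F) {k : Fin P.n} {x : ℝ}
    (hx : x ∈ Ioo (P.τ k.castSucc) (P.τ k.succ)) : HasDerivAt F (deriv F x) x :=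
  (((hF.2 k).differentiableOn one_ne_zero x (Ioo_subset_Icc_self hx)).differentiableAt
    (Icc_mem_nhds hx.1 hx.2)).hasDerivAt

theorem IsPiecewiseC1.piecewiseContinuous_deriv {F : ℝ → ℝ} (hF : P.IsPiecewiseC1 F) :
    P.PiecewiseContinuous (deriv F) := fun k =>
  ⟨derivWithin F (Icc (P.τ k.castSucc) (P.τ k.succ)),
    (hF.2 k).continuousOn_derivWithin (uniqueDiffOn_Icc (P.strictMono Fin.castSucc_lt_succ))
      le_rfl,
    fun _ hx => (derivWithin_of_mem_nhds (Icc_mem_nhds hx.1 hx.2)).symm⟩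

theorem IsPiecewiseC1.congr {F G : ℝ → ℝ} (hF : P.IsPiecewiseC1 F) (h : EqOn G F (Icc 0 T)) :
    P.IsPiecewiseC1 G :=
  ⟨hF.1.congr h, fun k => (hF.2 k).congr fun _ hx => h (P.Icc_subset k hx)⟩

theorem isPiecewiseC1_const (c : ℝ) : P.IsPiecewiseC1 fun _ => c :=
  ⟨continuousOn_const, fun _ => contDiffOn_const⟩

theorem IsPiecewiseC1.const_mul {F : ℝ → ℝ} (c : ℝ) (hF : P.IsPiecewiseC1 F) :
    P.IsPiecewiseC1 fun t => c * F t :=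
  ⟨continuousOn_const.mul hF.1, fun k => contDiffOn_const.mul (hF.2 k)⟩

theorem isPiecewiseC1_sum {ι : Type*} (s : Finset ι) {F : ι → ℝ → ℝ}
    (h : ∀ i ∈ s, P.IsPiecewiseC1 (F i)) : P.IsPiecewiseC1 fun t => ∑ i ∈ s, F i t :=
  ⟨continuousOn_finsetSum s fun i hi => (h i hi).1,
    fun k => ContDiffOn.sum fun i hi => (h i hi).2 k⟩

end Partition

end Calculus

section Signature

variable {α : Type*} {T : ℝ} {P : Partition T} {X : RawPath α}

/-- The time derivative of `t ↦ ⟨σ(X)_t, w⟩`. -/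
noncomputable def sigDeriv (X : RawPath α) (t : ℝ) (w : Word α) : ℝ :=
  match w.reverse with
  | [] => 0
  | a :: v => sigRev X.toFun v t * deriv (fun s => X.toFun s a) t

@[simp]
theorem sigDeriv_append_singleton (t : ℝ) (w : Word α) (a : α) :
    sigDeriv X t (w ++ [a]) = sigUpTo X t w * deriv (fun s => X.toFun s a) t := by
  simp [sigDeriv, sigUpTo]

@[simp]
theorem sigUpTo_nil (t : ℝ) : sigUpTo X t [] = 1 := rfl

theorem sigUpTo_zero_append_singleton (w : Word α) (a : α) : sigUpTo X 0 (w ++ [a]) = 0 := by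
  simp [sigUpTo, sigRev]

theorem pairF_sigUpTo_zero_rsh (y : TA α) {z : TA α} (hz : z [] = 0) :
    pairF (sigUpTo X 0) (rsh y z) = 0 := by
  simpa [pairF_eq_sum] using pairF_rsh_eq_mul (g := sigUpTo X 0) (h := fun _ => 0)
    (fun u v a => by simp [sigUpTo_zero_append_singleton, shuffleSum_zero]) y hz

theorem isPiecewiseC1_sigRev
    (hX : ∀ i, P.IsPiecewiseC1 fun t => X.toFun t i) (w : Word α) :
    P.IsPiecewiseC1 (sigRev X.toFun w) := by
  induction w with
  | nil => exact Partition.isPiecewiseC1_const 1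
  | cons i w ih =>
    exact ((hX i).piecewiseContinuous_deriv.continuousOn_mul ih.1).isPiecewiseC1_primitive

theorem isPiecewiseC1_sigUpTo
    (hX : ∀ i, P.IsPiecewiseC1 fun t => X.toFun t i) (w : Word α) :
    P.IsPiecewiseC1 fun t => sigUpTo X t w :=
  isPiecewiseC1_sigRev hX w.reverse

theorem hasDerivAt_sigRev_cons
    (hX : ∀ i, P.IsPiecewiseC1 fun t => X.toFun t i) (i : α) (w : Word α) {k : Fin P.n} {x : ℝ}
    (hx : x ∈ Ioo (P.τ k.castSucc) (P.τ k.succ)) :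
    HasDerivAt (sigRev X.toFun (i :: w))
      (sigRev X.toFun w x * deriv (fun t => X.toFun t i) x) x :=
  ((hX i).piecewiseContinuous_deriv.continuousOn_mul
    (isPiecewiseC1_sigRev hX w).1).hasDerivAt_primitive hx

theorem hasDerivAt_sigUpTo
    (hX : ∀ i, P.IsPiecewiseC1 fun t => X.toFun t i) (w : Word α) {k : Fin P.n} {x : ℝ}
    (hx : x ∈ Ioo (P.τ k.castSucc) (P.τ k.succ)) :
    HasDerivAt (fun t => sigUpTo X t w) (sigDeriv X x w) x := by
  rcases w.eq_nil_or_concat' with rfl | ⟨v, a, rfl⟩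
  · exact hasDerivAt_const x 1
  · simpa [sigUpTo] using hasDerivAt_sigRev_cons hX a v.reverse hx

theorem isPiecewiseC1_pairF_sigUpTo
    (hX : ∀ i, P.IsPiecewiseC1 fun t => X.toFun t i) (y : TA α) :
    P.IsPiecewiseC1 fun t => pairF (sigUpTo X t) y :=
  Partition.isPiecewiseC1_sum y.support fun w _ =>
    (isPiecewiseC1_sigUpTo hX w).const_mul (y w)

theorem hasDerivAt_pairF_sigUpTo
    (hX : ∀ i, P.IsPiecewiseC1 fun t => X.toFun t i) (y : TA α) {k : Fin P.n} {x : ℝ}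
    (hx : x ∈ Ioo (P.τ k.castSucc) (P.τ k.succ)) :
    HasDerivAt (fun t => pairF (sigUpTo X t) y) (pairF (sigDeriv X x) y) x :=
  HasDerivAt.fun_sum fun w _ => (hasDerivAt_sigUpTo hX w hx).const_mul (y w)

/-- Both sides vanish at `0` and, by induction on the lengths, have the same derivative. -/
theorem sigUpTo_mul_sigUpTo
    (hX : ∀ i, P.IsPiecewiseC1 fun t => X.toFun t i) (u v : Word α) {t : ℝ} (ht : t ∈ Icc 0 T) :
    sigUpTo X t u * sigUpTo X t v = shuffleSum (sigUpTo X t) u v := by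
  obtain ⟨N, hN⟩ : ∃ N, u.length + v.length = N := ⟨_, rfl⟩
  induction N using Nat.strong_induction_on generalizing u v t with
  | _ N ih =>
  rcases u.eq_nil_or_concat' with rfl | ⟨u, a, rfl⟩
  · simp
  rcases v.eq_nil_or_concat' with rfl | ⟨v, b, rfl⟩
  · simp
  simp only [List.length_append, List.length_singleton] at hN
  have hderiv : ∀ x ∈ Icc 0 T, shuffleSum (sigDeriv X x) (u ++ [a]) (v ++ [b]) =
      sigDeriv X x (u ++ [a]) * sigUpTo X x (v ++ [b]) +
        sigUpTo X x (u ++ [a]) * sigDeriv X x (v ++ [b]) := by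
    intro x hx
    simp only [shuffleSum_append_singleton, sigDeriv_append_singleton, shuffleSum_mul_right]
    rw [← ih _ (by simp; omega) u (v ++ [b]) hx rfl, ← ih _ (by simp; omega) (u ++ [a]) v hx rfl]
    ring
  refine (P.eqOn_of_hasDerivAt (F := fun t => sigUpTo X t (u ++ [a]) * sigUpTo X t (v ++ [b]))
    ((isPiecewiseC1_sigUpTo hX _).1.mul (isPiecewiseC1_sigUpTo hX _).1)
    (isPiecewiseC1_pairF_sigUpTo hX (shw (u ++ [a]) (v ++ [b]))).1 ?_
    (fun k x hx => (hasDerivAt_sigUpTo hX _ hx).mul (hasDerivAt_sigUpTo hX _ hx))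
    (fun k x hx => ?_) ht).trans (pairF_shw _ _ _)
  · simp [sigUpTo_zero_append_singleton, pairF_shw, shuffleSum_append_singleton, shuffleSum_zero]
  · rw [← hderiv x (P.Icc_subset k (Ioo_subset_Icc_self hx)), ← pairF_shw]
    exact hasDerivAt_pairF_sigUpTo hX _ hx

theorem pairF_sigUpTo_sh
    (hX : ∀ i, P.IsPiecewiseC1 fun t => X.toFun t i) (y z : TA α) {t : ℝ} (ht : t ∈ Icc 0 T) :
    pairF (sigUpTo X t) (sh y z) = pairF (sigUpTo X t) y * pairF (sigUpTo X t) z :=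
  pairF_sh_eq_mul (fun u v => (sigUpTo_mul_sigUpTo hX u v ht).symm) y z

theorem pairF_sigDeriv_rsh
    (hX : ∀ i, P.IsPiecewiseC1 fun t => X.toFun t i) (y : TA α) {z : TA α} (hz : z [] = 0)
    {t : ℝ} (ht : t ∈ Icc 0 T) :
    pairF (sigDeriv X t) (rsh y z) = pairF (sigUpTo X t) y * pairF (sigDeriv X t) z :=
  pairF_rsh_eq_mul (fun u v a => by
    simp only [sigDeriv_append_singleton, shuffleSum_mul_right, ← sigUpTo_mul_sigUpTo hX u v ht]
    ring) y hz

theorem sigUpTo_singleton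
    (hX : ∀ i, P.IsPiecewiseC1 fun t => X.toFun t i) (j : α) {t : ℝ} (ht : t ∈ Icc 0 T) :
    sigUpTo X t [j] = X.toFun t j - X.toFun 0 j := by
  refine P.eqOn_of_hasDerivAt (isPiecewiseC1_sigUpTo hX [j]).1 ((hX j).1.sub continuousOn_const)
    (by simpa using sigUpTo_zero_append_singleton (X := X) [] j) (fun k x hx => ?_)
    (fun k x hx => ((hX j).hasDerivAt hx).sub_const _) ht
  have h := hasDerivAt_sigUpTo hX ([] ++ [j]) hx
  rw [sigDeriv_append_singleton] at h
  simpa using h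

end Signature

section Variety

variable {α β : Type*}

theorem IsPath.exists_partition {X : RawPath α} (hX : IsPath X) :
    0 < X.T ∧ ∃ P : Partition X.T, ∀ i, P.IsPiecewiseC1 fun t => X.toFun t i := by
  obtain ⟨hT, hc, n, τ, hmono, h0, hlast, hd⟩ := hX
  exact ⟨hT, ⟨n, τ, hmono, h0, hlast⟩, fun i => ⟨hc i, fun k => hd k i⟩⟩

theorem Partition.isPath {T : ℝ} (P : Partition T) (hT : 0 < T) {X : RawPath α} (hXT : X.T = T)
   
    (hX : ∀ i, P.IsPiecewiseC1 fun t => X.toFun t i) : IsPath X := by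
  subst hXT
  exact ⟨hT, fun i => (hX i).1, P.n, P.τ, P.strictMono, P.τ_zero, P.τ_last, fun k i => (hX i).2 k⟩

section Polynomial

variable {Φ : MvPolynomial α ℝ → TA α}

theorem apply_nil_eq_eval_zero (hadd : ∀ q r, Φ (q + r) = Φ q + Φ r)
    (hmul : ∀ q r, Φ (q * r) = sh (Φ q) (Φ r))
    (hC : ∀ c : ℝ, Φ (MvPolynomial.C c) = Finsupp.single [] c)
    (hXj : ∀ j : α, Φ (MvPolynomial.X j) = Finsupp.single [j] 1) (q : MvPolynomial α ℝ) :
    Φ q [] = MvPolynomial.eval (fun _ => 0) q := by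
  induction q using MvPolynomial.induction_on with
  | C c => simp [hC]
  | add q r hq hr => simp [hadd, hq, hr]
  | mul_X q j hq => simp [hmul, sh_apply_nil, hXj, hq]

theorem eval_sub_eq_pairF_sigUpTo (hadd : ∀ q r, Φ (q + r) = Φ q + Φ r)
    (hmul : ∀ q r, Φ (q * r) = sh (Φ q) (Φ r))
    (hC : ∀ c : ℝ, Φ (MvPolynomial.C c) = Finsupp.single [] c)
    (hXj : ∀ j : α, Φ (MvPolynomial.X j) = Finsupp.single [j] 1)
    {T : ℝ} {P : Partition T} {X : RawPath α}
   
    (hX : ∀ i, P.IsPiecewiseC1 fun t => X.toFun t i) (q : MvPolynomial α ℝ) {t : ℝ}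
    (ht : t ∈ Icc 0 T) :
    MvPolynomial.eval (fun i => X.toFun t i - X.toFun 0 i) q = pairF (sigUpTo X t) (Φ q) := by
  induction q using MvPolynomial.induction_on with
  | C c => simp [hC]
  | add q r hq hr => simp [hadd, hq, hr]
  | mul_X q j hq =>
    rw [MvPolynomial.eval_mul, MvPolynomial.eval_X, hmul, pairF_sigUpTo_sh hX _ _ ht, hq, hXj,
      pairF_single, one_mul, sigUpTo_singleton hX j ht]

end Polynomial

theorem sigUpTo_eq_pairF_lamW {T : ℝ} {P : Partition T} {X : RawPath α}
   
    (hX : ∀ i, P.IsPiecewiseC1 fun t => X.toFun t i) {Y : RawPath β} {B : β → TA α}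
    (hB : ∀ j, B j [] = 0)
    (hY : ∀ j, EqOn (fun t => Y.toFun t j) (fun t => pairF (sigUpTo X t) (B j)) (Icc 0 T))
    (w : Word β) {t : ℝ} (ht : t ∈ Icc 0 T) :
    sigUpTo Y t w = pairF (sigUpTo X t) (lamW B w) := by
  have hYP : ∀ j, P.IsPiecewiseC1 fun t => Y.toFun t j := fun j =>
    (isPiecewiseC1_pairF_sigUpTo hX (B j)).congr (hY j)
  suffices h : ∀ u, EqOn (sigRev Y.toFun u) (fun t => pairF (sigUpTo X t) (lamRev B u)) (Icc 0 T)
    from h w.reverse ht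
  intro u
  induction u with
  | nil => intro t _; simp [sigRev, lamRev]
  | cons i u ih =>
    simp only [lamRev_cons]
    refine P.eqOn_of_hasDerivAt (isPiecewiseC1_sigRev hYP _).1
      (isPiecewiseC1_pairF_sigUpTo hX _).1 (by simp [sigRev, pairF_sigUpTo_zero_rsh _ (hB i)])
      (fun k x hx => hasDerivAt_sigRev_cons hYP i u hx) (fun k x hx => ?_)
    have hx' := P.Icc_subset k (Ioo_subset_Icc_self hx)
    have hYi : deriv (fun t => Y.toFun t i) x = pairF (sigDeriv X x) (B i) :=
      ((hasDerivAt_pairF_sigUpTo hX (B i) hx).congr_of_eventuallyEq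
        (Filter.eventuallyEq_of_mem (Ioo_mem_nhds hx.1 hx.2)
          fun s hs => hY i (P.Icc_subset k (Ioo_subset_Icc_self hs)))).deriv
    rw [ih hx', hYi, ← pairF_sigDeriv_rsh hX _ (hB i) hx']
    exact hasDerivAt_pairF_sigUpTo hX _ hx

theorem setOf_isPath_and_mem_V_eq {W : Set (TA β)} {B : β → TA α} (hB : ∀ j, B j [] = 0)
    (Y : RawPath α → RawPath β) (hYT : ∀ X, (Y X).T = X.T)
    (hY : ∀ X, IsPath X →
      ∀ j, EqOn (fun t => (Y X).toFun t j) (fun t => pairF (sigUpTo X t) (B j)) (Icc 0 X.T)) :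
    {X | IsPath X ∧ Y X ∈ V W} = V (Lam B '' W) := by
  ext X
  refine and_congr_right fun hX => ?_
  obtain ⟨hT, P, hP⟩ := hX.exists_partition
  have hYP : IsPath (Y X) := P.isPath hT (hYT X) fun j =>
    (isPiecewiseC1_pairF_sigUpTo hP (B j)).congr (hY X hX j)
  have hpair : ∀ x, pair (Y X) x = pair X (Lam B x) := fun x => by
    rw [pair_eq_pairF, pair_eq_pairF, pairF_Lam]
    refine congrArg (pairF · x) (funext fun w => ?_)
    rw [sig, hYT]
    exact sigUpTo_eq_pairF_lamW hP hB (hY X hX) w ⟨hT.le, le_rfl⟩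
  simp [V, hYP, hpair]

end Variety

/-- (1) For a polynomial map `p : ℝ^d → ℝ^t` with `p(0) = 0` and
`W ⊆ T(ℝ^t)`, the paths `X` with `(t ↦ p(X_t − X₀)) ∈ 𝒱(W)` form `𝒱(M_p W)` where
`M_p = Λ_{φ∘p}`.  (2) For linear `B : ℝ^t → T^{≥1}(ℝ^d)`, the paths `X` with
`Λ_B^* X ∈ 𝒱(W)` form `𝒱(Λ_B W)`. -/
theorem statement12 {d t : ℕ} (W : Set (TA (Fin t))) :
    (∀ p : Fin t → MvPolynomial (Fin d) ℝ,
      (∀ j, MvPolynomial.eval (fun _ => (0 : ℝ)) (p j) = 0) →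
      ∀ Φ : MvPolynomial (Fin d) ℝ → TA (Fin d),
        (∀ q r, Φ (q + r) = Φ q + Φ r) →
        (∀ q r, Φ (q * r) = sh (Φ q) (Φ r)) →
        (∀ c : ℝ, Φ (MvPolynomial.C c) = Finsupp.single [] c) →
        (∀ j : Fin d, Φ (MvPolynomial.X j) = Finsupp.single [j] 1) →
        {X : RawPath (Fin d) | IsPath X ∧
            (⟨X.T, fun s j => MvPolynomial.eval (fun i => X.toFun s i - X.toFun 0 i) (p j)⟩ :
              RawPath (Fin t)) ∈ V W} =
          V ((Lam fun j => Φ (p j)) '' W)) ∧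
    (∀ B : Fin t → TA (Fin d), (∀ j, (B j) [] = 0) →
      {X : RawPath (Fin d) | IsPath X ∧
          (⟨X.T, fun s j => pairF (sigUpTo X s) (B j)⟩ : RawPath (Fin t)) ∈ V W} =
        V ((Lam B) '' W)) := by
  refine ⟨fun p hp Φ hadd hmul hC hXj => ?_, fun B hB => ?_⟩
  · refine setOf_isPath_and_mem_V_eq
      (fun j => (apply_nil_eq_eval_zero hadd hmul hC hXj (p j)).trans (hp j)) _ (fun _ => rfl)
      fun X hX j s hs => ?_
    obtain ⟨-, P, hP⟩ := hX.exists_partition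
    exact eval_sub_eq_pairF_sigUpTo hadd hmul hC hXj hP (p j) hs
  · exact setOf_isPath_and_mem_V_eq hB _ (fun _ => rfl) fun _ _ _ => eqOn_refl _ _

end PathVarieties
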